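/- An involution t in a finite Coxeter group W = W₁ × W₂ (a product of two reflection groups acting on V = V₁ ⊕ V₂) is special if and only if each of its components t₁ ∈ W₁ and t₂ ∈ W₂ is special. -/
import Mathlib


/-- An involution `t` on `V` with root set `Φ` is special if for every root
`α ∈ Φ`, its projection onto the `1`-eigenspace of `t` (proportional to
`α + t α`) is proportional to a root fixed by `t`, or its projection onto the
`(-1)`-eigenspace (proportional to `α - t α`) is proportional to a root
negated by `t`. -/
def IsSpecialInvolution {V : Type*} [AddCommGroup V] [Module ℝ V]
    (Φ : Set V) (t : V →ₗ[ℝ] V) : Prop :=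
  ∀ α ∈ Φ, (∃ β ∈ Φ, t β = β ∧ ∃ c : ℝ, α + t α = c • β) ∨
           (∃ β ∈ Φ, t β = -β ∧ ∃ c : ℝ, α - t α = c • β)

/-- An involution in a product `W₁ × W₂` (acting on `V₁ ⊕ V₂`, with root system
the union of the two root systems) is special iff each component is special. -/
theorem special_iff_components_special
    {V₁ V₂ : Type*} [AddCommGroup V₁] [Module ℝ V₁]
    [AddCommGroup V₂] [Module ℝ V₂]
    (Φ₁ : Set V₁) (Φ₂ : Set V₂)
    (t₁ : V₁ →ₗ[ℝ] V₁) (t₂ : V₂ →ₗ[ℝ] V₂)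
    (ht₁ : t₁ ∘ₗ t₁ = LinearMap.id) (ht₂ : t₂ ∘ₗ t₂ = LinearMap.id) :
    IsSpecialInvolution
      ((LinearMap.inl ℝ V₁ V₂) '' Φ₁ ∪ (LinearMap.inr ℝ V₁ V₂) '' Φ₂)
      (LinearMap.prodMap t₁ t₂)
      ↔ IsSpecialInvolution Φ₁ t₁ ∧ IsSpecialInvolution Φ₂ t₂ := by
  constructor
  · intro h
    constructor
    · intro α hα
      have := h ((α, 0)) (Or.inl ⟨α, hα, rfl⟩)
      rcases this with ⟨β, hβ, hfix, c, hc⟩ | ⟨β, hβ, hneg, c, hc⟩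
      · rcases hβ with ⟨b, hb, rfl⟩ | ⟨b, hb, rfl⟩
        · -- β = (b, 0)
          refine Or.inl ⟨b, hb, ?_, c, ?_⟩
          · simpa using congrArg Prod.fst hfix
          · simpa using congrArg Prod.fst hc
        · -- β = (0, b) : first component gives α + t₁ α = 0
          have h0 : α + t₁ α = 0 := by simpa using congrArg Prod.fst hc
          have : t₁ α = -α := eq_neg_of_add_eq_zero_right h0
          refine Or.inr ⟨α, hα, this, 2, ?_⟩
          rw [this]; module
      · rcases hβ with ⟨b, hb, rfl⟩ | ⟨b, hb, rfl⟩
        · refine Or.inr ⟨b, hb, ?_, c, ?_⟩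
          · simpa using congrArg Prod.fst hneg
          · simpa using congrArg Prod.fst hc
        · have h0 : α - t₁ α = 0 := by simpa using congrArg Prod.fst hc
          have : t₁ α = α := (sub_eq_zero.mp h0).symm
          refine Or.inl ⟨α, hα, this, 2, ?_⟩
          rw [this]; module
    · intro α hα
      have := h ((0, α)) (Or.inr ⟨α, hα, rfl⟩)
      rcases this with ⟨β, hβ, hfix, c, hc⟩ | ⟨β, hβ, hneg, c, hc⟩
      · rcases hβ with ⟨b, hb, rfl⟩ | ⟨b, hb, rfl⟩
        · have h0 : α + t₂ α = 0 := by simpa using congrArg Prod.snd hc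
          have : t₂ α = -α := eq_neg_of_add_eq_zero_right h0
          refine Or.inr ⟨α, hα, this, 2, ?_⟩
          rw [this]; module
        · refine Or.inl ⟨b, hb, ?_, c, ?_⟩
          · simpa using congrArg Prod.snd hfix
          · simpa using congrArg Prod.snd hc
      · rcases hβ with ⟨b, hb, rfl⟩ | ⟨b, hb, rfl⟩
        · have h0 : α - t₂ α = 0 := by simpa using congrArg Prod.snd hc
          have : t₂ α = α := (sub_eq_zero.mp h0).symm
          refine Or.inl ⟨α, hα, this, 2, ?_⟩
          rw [this]; module
        · refine Or.inr ⟨b, hb, ?_, c, ?_⟩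
          · simpa using congrArg Prod.snd hneg
          · simpa using congrArg Prod.snd hc
  · rintro ⟨h1, h2⟩ α (⟨a, ha, rfl⟩ | ⟨a, ha, rfl⟩)
    · rcases h1 a ha with ⟨β, hβ, hfix, c, hc⟩ | ⟨β, hβ, hneg, c, hc⟩
      · exact Or.inl ⟨(β, 0), Or.inl ⟨β, hβ, rfl⟩, by simp [hfix],
          c, by simp [Prod.ext_iff, hc]⟩
      · exact Or.inr ⟨(β, 0), Or.inl ⟨β, hβ, rfl⟩, by simp [Prod.ext_iff, hneg],
          c, by simp [Prod.ext_iff, hc]⟩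
    · rcases h2 a ha with ⟨β, hβ, hfix, c, hc⟩ | ⟨β, hβ, hneg, c, hc⟩
      · exact Or.inl ⟨(0, β), Or.inr ⟨β, hβ, rfl⟩, by simp [hfix],
          c, by simp [Prod.ext_iff, hc]⟩
      · exact Or.inr ⟨(0, β), Or.inr ⟨β, hβ, rfl⟩, by simp [Prod.ext_iff, hneg],
          c, by simp [Prod.ext_iff, hc]⟩
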